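/- Let Y ∈ ℝ^n, X ∈ ℝ^{n×p} with X′X invertible, Λ = (λ₁,…,λ_p) with λ₁ ≥ … ≥ λ_p ≥ 0 and λ₁ > 0. Let π* be any minimizer over C_Λ of π ↦ (X′Y − π)′(X′X)^{-1}(X′Y − π) and set β* = (X′X)^{-1}(X′Y − π*). Then β* minimizes b ↦ ½‖Y − Xb‖₂² + J_Λ(b) over ℝ^p, i.e. β* is the SLOPE estimator. -/
import Mathlib


open Matrix

/-- The SLOPE (sorted ℓ₁) norm `J_Λ(b) = ∑ Λᵢ |b|₍ᵢ₎`, expressed (for `Λ` sorted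
in decreasing order) as the maximum over permutations of `∑ Λᵢ |b (σ i)|`. -/
noncomputable def slopeNorm {p : ℕ} (Λ : Fin p → ℝ) (b : Fin p → ℝ) : ℝ :=
  ⨆ σ : Equiv.Perm (Fin p), ∑ i, Λ i * |b (σ i)|

/-- The SLOPE objective function `b ↦ ½‖Y - Xb‖₂² + J_Λ(b)`. -/
noncomputable def slopeObj {n p : ℕ} (X : Matrix (Fin n) (Fin p) ℝ) (Y : Fin n → ℝ)
    (Λ : Fin p → ℝ) (b : Fin p → ℝ) : ℝ :=
  (1 / 2) * ∑ i, (Y i - (X *ᵥ b) i) ^ 2 + slopeNorm Λ b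

/-- The unit ball `C_Λ` of the dual SLOPE norm. -/
def dualBall {p : ℕ} (Λ : Fin p → ℝ) : Set (Fin p → ℝ) :=
  {π | ∀ S : Finset (Fin p),
    ∑ j ∈ S, |π j| ≤ ∑ j ∈ Finset.univ.filter (fun j : Fin p => (j : ℕ) < S.card), Λ j}

section SlopeAux

open Finset

private lemma strictMono_fin_le {k p : ℕ} {f : Fin k → Fin p} (hf : StrictMono f)
    (i : Fin k) : (i : ℕ) ≤ (f i : ℕ) := by
  set F : ℕ → ℕ := fun m => if h : m < k then (f ⟨m, h⟩ : ℕ) else m + p with hF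
  have hFmono : StrictMono F := by
    intro a b hab
    by_cases ha : a < k <;> by_cases hb : b < k <;>
      simp only [hF, ha, hb, dif_pos, dif_neg, not_false_iff]
    · exact hf (show (⟨a, ha⟩ : Fin k) < ⟨b, hb⟩ from hab)
    · have := (f ⟨a, ha⟩).isLt; omega
    · omega
    · omega
  have h1 : (i : ℕ) ≤ F (i : ℕ) := hFmono.le_apply
  simpa only [hF, dif_pos i.isLt, Fin.eta] using h1

private lemma filter_sum_eq {p k : ℕ} (hk : k ≤ p) (F : Fin p → ℝ) :
    ∑ j ∈ Finset.univ.filter (fun j : Fin p => (j : ℕ) < k), F j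
      = ∑ m ∈ Finset.range k, (if h : m < p then F ⟨m, h⟩ else 0) := by
  rw [Finset.sum_filter]
  have h1 : ∀ j : Fin p, (if (j : ℕ) < k then F j else 0)
      = (fun m => if m < k then (if h : m < p then F ⟨m, h⟩ else 0) else 0) (j : ℕ) := by
    intro j; simp [j.isLt]
  rw [Finset.sum_congr rfl fun j _ => h1 j,
    Fin.sum_univ_eq_sum_range (fun m => if m < k then (if h : m < p then F ⟨m, h⟩ else 0) else 0) p,
    ← Finset.sum_filter]
  apply Finset.sum_congr _ fun _ _ => rfl
  ext m; simp; omega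

private lemma card_filter_lt {p k : ℕ} (hk : k ≤ p) :
    (Finset.univ.filter (fun j : Fin p => (j : ℕ) < k)).card = k := by
  have h : ∀ m ∈ Finset.range k, m < p := fun m hm =>
    lt_of_lt_of_le (Finset.mem_range.1 hm) hk
  have he : Finset.univ.filter (fun j : Fin p => (j : ℕ) < k)
      = (Finset.range k).attachFin h := by
    ext j; simp [Finset.mem_attachFin]
  rw [he, Finset.card_attachFin, Finset.card_range]

private lemma sum_le_top {p : ℕ} {Λ : Fin p → ℝ} (hΛ : Antitone Λ) (S : Finset (Fin p)) :
    ∑ j ∈ S, Λ j ≤ ∑ j ∈ Finset.univ.filter (fun j : Fin p => (j : ℕ) < S.card), Λ j := by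
  have hk : S.card ≤ p := le_trans (Finset.card_le_univ S) (by simp)
  have h1 : ∑ j ∈ S, Λ j = ∑ i : Fin S.card, Λ (S.orderEmbOfFin rfl i) := by
    rw [← Finset.sum_attach S Λ]
    refine (Fintype.sum_equiv (S.orderIsoOfFin rfl).toEquiv _ _ fun i => ?_).symm
    simp [Finset.coe_orderIsoOfFin_apply]
  rw [h1, filter_sum_eq hk Λ,
    ← Fin.sum_univ_eq_sum_range (fun m => if h : m < p then Λ ⟨m, h⟩ else 0) S.card]
  refine Finset.sum_le_sum fun i _ => ?_
  have hi : (i : ℕ) < p := lt_of_lt_of_le i.isLt hk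
  rw [dif_pos hi]
  exact hΛ (show (⟨(i : ℕ), hi⟩ : Fin p) ≤ S.orderEmbOfFin rfl i from
    strictMono_fin_le (S.orderEmbOfFin rfl).strictMono i)

private lemma abel_ineq (p : ℕ) (c L g : ℕ → ℝ)
    (hg : ∀ k, k + 1 < p → g (k + 1) ≤ g k) (hgl : 0 < p → 0 ≤ g (p - 1))
    (hpar : ∀ k, k ≤ p → ∑ i ∈ Finset.range k, c i ≤ ∑ i ∈ Finset.range k, L i) :
    ∑ i ∈ Finset.range p, c i * g i ≤ ∑ i ∈ Finset.range p, L i * g i := by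
  rcases Nat.eq_zero_or_pos p with h0 | h0
  · simp [h0]
  have hby : ∀ f : ℕ → ℝ, ∑ i ∈ Finset.range p, f i * g i
      = g (p - 1) * (∑ i ∈ Finset.range p, f i)
        - ∑ i ∈ Finset.range (p - 1),
            (g (i + 1) - g i) * (∑ j ∈ Finset.range (i + 1), f j) := by
    intro f
    have h := Finset.sum_range_by_parts g f p
    simpa [smul_eq_mul, mul_comm] using h
  rw [hby c, hby L]
  have h1 : g (p - 1) * (∑ i ∈ Finset.range p, c i)
      ≤ g (p - 1) * (∑ i ∈ Finset.range p, L i) :=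
    mul_le_mul_of_nonneg_left (hpar p le_rfl) (hgl h0)
  have h2 : ∑ i ∈ Finset.range (p - 1),
        (g (i + 1) - g i) * (∑ j ∈ Finset.range (i + 1), L j)
      ≤ ∑ i ∈ Finset.range (p - 1),
        (g (i + 1) - g i) * (∑ j ∈ Finset.range (i + 1), c j) := by
    refine Finset.sum_le_sum fun i hi => ?_
    have hip : i + 1 < p := by have := Finset.mem_range.1 hi; omega
    exact mul_le_mul_of_nonpos_left (hpar (i + 1) (le_of_lt hip))
      (by linarith [hg i hip])
  linarith

private lemma pairing_le_slope {p : ℕ} {Λ : Fin p → ℝ} (hΛ : Antitone Λ)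
    {π : Fin p → ℝ} (hπ : π ∈ dualBall Λ) (b : Fin p → ℝ) :
    ∑ j, π j * b j ≤ slopeNorm Λ b := by
  -- sorting permutation
  set τ : Equiv.Perm (Fin p) := Tuple.sort (fun i => |b i|) with hτ
  set σ : Equiv.Perm (Fin p) := (Fin.revPerm : Equiv.Perm (Fin p)).trans τ with hσ
  have hanti : ∀ i j : Fin p, i ≤ j → |b (σ j)| ≤ |b (σ i)| := by
    intro i j hij
    have h1 : Fin.rev j ≤ Fin.rev i := Fin.rev_le_rev.2 hij
    exact Tuple.monotone_sort (fun i => |b i|) h1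
  set cN : ℕ → ℝ := fun m => if h : m < p then |π (σ ⟨m, h⟩)| else 0 with hcN
  set gN : ℕ → ℝ := fun m => if h : m < p then |b (σ ⟨m, h⟩)| else 0 with hgN
  set LN : ℕ → ℝ := fun m => if h : m < p then Λ ⟨m, h⟩ else 0 with hLN
  have key : ∑ m ∈ Finset.range p, cN m * gN m ≤ ∑ m ∈ Finset.range p, LN m * gN m := by
    refine abel_ineq p cN LN gN ?_ ?_ ?_
    · intro k hk
      have hk' : k < p := by omega
      simp only [hgN, dif_pos hk, dif_pos hk']
      exact hanti ⟨k, hk'⟩ ⟨k + 1, hk⟩ (by simp [Fin.le_def])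
    · intro h0
      have : p - 1 < p := by omega
      simp only [hgN, dif_pos this]
      exact abs_nonneg _
    · intro k hk
      set T : Finset (Fin p) :=
        (Finset.univ.filter (fun j : Fin p => (j : ℕ) < k)).image σ with hT
      have hTc : T.card = k := by
        rw [hT, Finset.card_image_of_injective _ σ.injective, card_filter_lt hk]
      have h5 := hπ T
      rw [hTc] at h5
      have h6 : ∑ j ∈ T, |π j|
          = ∑ j ∈ Finset.univ.filter (fun j : Fin p => (j : ℕ) < k), |π (σ j)| := by
        rw [hT]
        exact Finset.sum_image fun x _ y _ h => σ.injective h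
      rw [h6, filter_sum_eq hk (fun j => |π (σ j)|), filter_sum_eq hk Λ] at h5
      exact h5
  have e1 : ∑ j, π j * b j = ∑ i, π (σ i) * b (σ i) :=
    (Equiv.sum_comp σ (fun j => π j * b j)).symm
  have e2 : ∑ i, π (σ i) * b (σ i) ≤ ∑ i, |π (σ i)| * |b (σ i)| := by
    refine Finset.sum_le_sum fun i _ => ?_
    calc π (σ i) * b (σ i) ≤ |π (σ i) * b (σ i)| := le_abs_self _
    _ = |π (σ i)| * |b (σ i)| := abs_mul _ _
  have e3 : ∑ i : Fin p, |π (σ i)| * |b (σ i)| = ∑ m ∈ Finset.range p, cN m * gN m := by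
    rw [← Fin.sum_univ_eq_sum_range (fun m => cN m * gN m) p]
    refine Finset.sum_congr rfl fun i _ => ?_
    simp [hcN, hgN, i.isLt]
  have e4 : ∑ m ∈ Finset.range p, LN m * gN m = ∑ i : Fin p, Λ i * |b (σ i)| := by
    rw [← Fin.sum_univ_eq_sum_range (fun m => LN m * gN m) p]
    refine Finset.sum_congr rfl fun i _ => ?_
    simp [hLN, hgN, i.isLt]
  have e5 : ∑ i : Fin p, Λ i * |b (σ i)| ≤ slopeNorm Λ b :=
    le_ciSup (f := fun σ : Equiv.Perm (Fin p) => ∑ i, Λ i * |b (σ i)|)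
      (Set.finite_range _).bddAbove σ
  calc ∑ j, π j * b j = ∑ i, π (σ i) * b (σ i) := e1
  _ ≤ ∑ i, |π (σ i)| * |b (σ i)| := e2
  _ = ∑ m ∈ Finset.range p, cN m * gN m := e3
  _ ≤ ∑ m ∈ Finset.range p, LN m * gN m := key
  _ = ∑ i : Fin p, Λ i * |b (σ i)| := e4
  _ ≤ slopeNorm Λ b := e5

private lemma slope_le_pairing {p : ℕ} {Λ : Fin p → ℝ} (hΛ : Antitone Λ)
    (hΛ0 : ∀ i, 0 ≤ Λ i) (β : Fin p → ℝ) (M : ℝ)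
    (hM : ∀ π ∈ dualBall Λ, ∑ j, π j * β j ≤ M) :
    slopeNorm Λ β ≤ M := by
  refine ciSup_le fun σ => ?_
  set sg : Fin p → ℝ := fun j => if 0 ≤ β j then 1 else -1 with hsgdef
  have hsg : ∀ j, sg j * β j = |β j| := by
    intro j
    by_cases h : 0 ≤ β j
    · simp [hsgdef, h, abs_of_nonneg h]
    · simp [hsgdef, h, abs_of_neg (lt_of_not_ge h)]
  have habs : ∀ j, |sg j| = 1 := by
    intro j; by_cases h : 0 ≤ β j <;> simp [hsgdef, h]
  set πσ : Fin p → ℝ := fun j => sg j * Λ (σ.symm j) with hπσ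
  have hmem : πσ ∈ dualBall Λ := by
    intro S
    have h1 : ∀ j, |πσ j| = Λ (σ.symm j) := by
      intro j; rw [hπσ]; simp only
      rw [abs_mul, habs, one_mul, abs_of_nonneg (hΛ0 _)]
    calc ∑ j ∈ S, |πσ j| = ∑ j ∈ S, Λ (σ.symm j) :=
          Finset.sum_congr rfl fun j _ => h1 j
    _ = ∑ j ∈ S.image σ.symm, Λ j :=
          (Finset.sum_image fun x _ y _ h => σ.symm.injective h).symm
    _ ≤ ∑ j ∈ Finset.univ.filter (fun j : Fin p => (j : ℕ) < (S.image σ.symm).card), Λ j :=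
          sum_le_top hΛ _
    _ = ∑ j ∈ Finset.univ.filter (fun j : Fin p => (j : ℕ) < S.card), Λ j := by
          rw [Finset.card_image_of_injective _ σ.symm.injective]
  have hval : ∑ j, πσ j * β j = ∑ i, Λ i * |β (σ i)| := by
    rw [← Equiv.sum_comp σ (fun j => πσ j * β j)]
    refine Finset.sum_congr rfl fun i _ => ?_
    have : πσ (σ i) * β (σ i) = Λ i * (sg (σ i) * β (σ i)) := by
      rw [hπσ]; simp only [Equiv.symm_apply_apply]; ring
    rw [this, hsg]
  exact hval ▸ hM πσ hmem

end SlopeAux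

/-- If `π*` minimizes `π ↦ (X'Y - π)'(X'X)⁻¹(X'Y - π)` over `C_Λ` and
`β* = (X'X)⁻¹(X'Y - π*)`, then `β*` minimizes the SLOPE objective
`b ↦ ½‖Y - Xb‖₂² + J_Λ(b)` over `ℝᵖ`: it is the SLOPE estimator. -/
theorem dual_minimizer_is_slope {n p : ℕ} (hp : 0 < p)
    (X : Matrix (Fin n) (Fin p) ℝ) (Y : Fin n → ℝ) (hX : IsUnit (Xᵀ * X).det)
    (Λ : Fin p → ℝ) (hΛanti : Antitone Λ) (hΛnonneg : ∀ i, 0 ≤ Λ i)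
    (hlam1 : 0 < Λ ⟨0, hp⟩)
    (πstar : Fin p → ℝ) (hmem : πstar ∈ dualBall Λ)
    (hmin : ∀ π ∈ dualBall Λ,
      (Xᵀ *ᵥ Y - πstar) ⬝ᵥ ((Xᵀ * X)⁻¹ *ᵥ (Xᵀ *ᵥ Y - πstar)) ≤
        (Xᵀ *ᵥ Y - π) ⬝ᵥ ((Xᵀ * X)⁻¹ *ᵥ (Xᵀ *ᵥ Y - π)))
    (βstar : Fin p → ℝ) (hβ : βstar = (Xᵀ * X)⁻¹ *ᵥ (Xᵀ *ᵥ Y - πstar)) :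
    ∀ b, slopeObj X Y Λ βstar ≤ slopeObj X Y Λ b := by
  intro b
  set A : Matrix (Fin p) (Fin p) ℝ := (Xᵀ * X)⁻¹ with hA
  set u : Fin p → ℝ := Xᵀ *ᵥ Y with hu
  have hAsymm : Aᵀ = A := by
    rw [hA, Matrix.transpose_nonsing_inv, Matrix.transpose_mul, Matrix.transpose_transpose]
  have hpairsymm : ∀ v w : Fin p → ℝ, v ⬝ᵥ (A *ᵥ w) = w ⬝ᵥ (A *ᵥ v) := by
    intro v w
    rw [Matrix.dotProduct_mulVec, ← Matrix.mulVec_transpose, hAsymm, dotProduct_comm]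
  -- variational inequality
  have hvar : ∀ π ∈ dualBall Λ, ∑ j, π j * βstar j ≤ ∑ j, πstar j * βstar j := by
    intro π hπC
    set d : Fin p → ℝ := π - πstar with hd
    set w : Fin p → ℝ := u - πstar with hwdef
    have key : d ⬝ᵥ βstar ≤ 0 := by
      by_contra hcon
      push_neg at hcon
      set q : ℝ := d ⬝ᵥ (A *ᵥ d) with hq
      set ε : ℝ := d ⬝ᵥ βstar with hε
      set t : ℝ := if q ≤ 0 then (1 : ℝ) else min 1 (ε / q) with ht
      have ht0 : 0 < t := by
        rw [ht]; split
        · norm_num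
        · next h =>
          push_neg at h
          exact lt_min one_pos (div_pos hcon h)
      have ht1 : t ≤ 1 := by
        rw [ht]; split
        · exact le_refl 1
        · exact min_le_left _ _
      have htq : t * q < 2 * ε := by
        rw [ht]; split
        · next h => nlinarith
        · next h =>
          push_neg at h
          have h1 : min 1 (ε / q) ≤ ε / q := min_le_right _ _
          have h2 : min 1 (ε / q) * q ≤ (ε / q) * q :=
            mul_le_mul_of_nonneg_right h1 (le_of_lt h)
          rw [div_mul_cancel₀ _ (ne_of_gt h)] at h2
          linarith
      -- membership of the convex combination
      have hmemt : (πstar + t • d) ∈ dualBall Λ := by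
        intro S
        have hterm : ∀ j, |(πstar + t • d) j| ≤ (1 - t) * |πstar j| + t * |π j| := by
          intro j
          have h1 : (πstar + t • d) j = (1 - t) * πstar j + t * π j := by
            simp [hd]; ring
          rw [h1]
          calc |(1 - t) * πstar j + t * π j| ≤ |(1 - t) * πstar j| + |t * π j| := abs_add_le _ _
          _ = (1 - t) * |πstar j| + t * |π j| := by
              rw [abs_mul, abs_mul, abs_of_nonneg (by linarith : (0:ℝ) ≤ 1 - t),
                abs_of_nonneg (le_of_lt ht0)]
        calc ∑ j ∈ S, |(πstar + t • d) j|
            ≤ ∑ j ∈ S, ((1 - t) * |πstar j| + t * |π j|) :=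
              Finset.sum_le_sum fun j _ => hterm j
        _ = (1 - t) * ∑ j ∈ S, |πstar j| + t * ∑ j ∈ S, |π j| := by
              rw [Finset.sum_add_distrib, Finset.mul_sum, Finset.mul_sum]
        _ ≤ (1 - t) * (∑ j ∈ Finset.univ.filter (fun j : Fin p => (j : ℕ) < S.card), Λ j)
              + t * (∑ j ∈ Finset.univ.filter (fun j : Fin p => (j : ℕ) < S.card), Λ j) := by
              have := hmem S
              have := hπC S
              have h1t : (0:ℝ) ≤ 1 - t := by linarith
              nlinarith
        _ = _ := by ring
      have hexp : (u - (πstar + t • d)) ⬝ᵥ (A *ᵥ (u - (πstar + t • d)))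
          = w ⬝ᵥ (A *ᵥ w) - 2 * t * ε + t * t * q := by
        have hw : u - (πstar + t • d) = w - t • d := by
          rw [hwdef]; ext j; simp; ring
        have hβ' : A *ᵥ w = βstar := hβ.symm
        have hcross : w ⬝ᵥ (A *ᵥ d) = ε := by
          rw [hpairsymm, hβ', hε]
        have hcross2 : d ⬝ᵥ (A *ᵥ w) = ε := by rw [hβ', hε]
        rw [hw]
        simp only [Matrix.mulVec_sub, Matrix.mulVec_smul, sub_dotProduct,
          dotProduct_sub, smul_dotProduct, dotProduct_smul,
          smul_eq_mul]
        rw [hcross, hcross2, ← hq]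
        ring
      have hle := hmin _ hmemt
      rw [hexp] at hle
      have h2 : 2 * t * ε ≤ t * t * q := by linarith
      have h3 : 2 * ε ≤ t * q := by
        have h2' : t * (2 * ε) ≤ t * (t * q) := by
          calc t * (2 * ε) = 2 * t * ε := by ring
          _ ≤ t * t * q := h2
          _ = t * (t * q) := by ring
        exact le_of_mul_le_mul_left h2' ht0
      linarith
    have hdot : d ⬝ᵥ βstar = ∑ j, π j * βstar j - ∑ j, πstar j * βstar j := by
      rw [hd, sub_dotProduct]; rfl
    linarith [hdot ▸ key]
  -- relations from invertibility
  have hGinv : (Xᵀ * X) * A = 1 := Matrix.mul_nonsing_inv _ hX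
  have hGβ : (Xᵀ * X) *ᵥ βstar = u - πstar := by
    rw [hβ, Matrix.mulVec_mulVec, hGinv, Matrix.one_mulVec]
  set e : Fin p → ℝ := b - βstar with he
  set r : Fin n → ℝ := Y - X *ᵥ βstar with hr
  have hXe : X *ᵥ b = X *ᵥ βstar + X *ᵥ e := by
    rw [he, Matrix.mulVec_sub]; ext i; simp
  have hre : r ⬝ᵥ (X *ᵥ e) = πstar ⬝ᵥ e := by
    rw [Matrix.dotProduct_mulVec, ← Matrix.mulVec_transpose]
    congr 1
    rw [hr, Matrix.mulVec_sub, Matrix.mulVec_mulVec, hGβ, hu]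
    ext j; simp
  -- quadratic expansion
  have hsum : ∑ i, (Y i - (X *ᵥ b) i) ^ 2
      = ∑ i, (r i) ^ 2 - 2 * (πstar ⬝ᵥ e) + ∑ i, ((X *ᵥ e) i) ^ 2 := by
    have hpt : ∀ i, (Y i - (X *ᵥ b) i) ^ 2
        = (r i) ^ 2 - 2 * (r i * (X *ᵥ e) i) + ((X *ᵥ e) i) ^ 2 := by
      intro i
      have h1 : (X *ᵥ b) i = (X *ᵥ βstar) i + (X *ᵥ e) i := by rw [hXe]; simp
      have h2 : r i = Y i - (X *ᵥ βstar) i := by rw [hr]; simp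
      rw [h1, h2]; ring
    rw [Finset.sum_congr rfl fun i _ => hpt i]
    rw [Finset.sum_add_distrib, Finset.sum_sub_distrib, ← Finset.mul_sum]
    rw [show r ⬝ᵥ (X *ᵥ e) = ∑ i, r i * (X *ᵥ e) i from rfl] at hre
    rw [hre]
  -- duality bounds
  have hJb : ∑ j, πstar j * b j ≤ slopeNorm Λ b := pairing_le_slope hΛanti hmem b
  have hJβ : slopeNorm Λ βstar ≤ ∑ j, πstar j * βstar j :=
    slope_le_pairing hΛanti hΛnonneg βstar _ hvar
  have hdote : πstar ⬝ᵥ e = ∑ j, πstar j * b j - ∑ j, πstar j * βstar j := by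
    rw [he, dotProduct_sub]; rfl
  have hsq : 0 ≤ ∑ i, ((X *ᵥ e) i) ^ 2 :=
    Finset.sum_nonneg fun i _ => sq_nonneg _
  have hrY : ∀ i, r i = Y i - (X *ᵥ βstar) i := fun i => by rw [hr]; simp
  simp only [slopeObj]
  rw [hsum]
  have hrsum : ∑ i, (Y i - (X *ᵥ βstar) i) ^ 2 = ∑ i, (r i) ^ 2 :=
    Finset.sum_congr rfl fun i _ => by rw [hrY i]
  rw [hrsum]
  linarith
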